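/- Let D be an H-colored digraph without isolated vertices, 𝔉 a walk-preservative H-class partition of A(D), and 𝒮 an independent and l-absorbent set in C_𝔉(D) for some l≥1. If K is a kernel by paths in D⟨∪_{F∈𝒮}F⟩, then K is an (l+1,H)-absorbent set by walks in D. -/
import Mathlib


universe u v

/-- A walk of length `n` in the digraph with arc relation `R`;
its vertices are `x 0, x 1, …, x n`. -/
def IsWalk {α : Type u} (R : α → α → Prop) (x : ℕ → α) (n : ℕ) : Prop :=
  ∀ i < n, R (x i) (x (i + 1))

/-- A (directed) path: a walk whose vertices `x 0, …, x n` are pairwise distinct. -/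
def IsPath {α : Type u} (R : α → α → Prop) (x : ℕ → α) (n : ℕ) : Prop :=
  IsWalk R x n ∧ ∀ i ≤ n, ∀ j ≤ n, x i = x j → i = j

/-- There is a directed path from `u` to `v` in the digraph with arc relation `R`. -/
def ExistsPath {α : Type u} (R : α → α → Prop) (u v : α) : Prop :=
  ∃ x n, IsPath R x n ∧ x 0 = u ∧ x n = v

/-- A cycle of length `n` in the digraph with arc relation `R`. -/
def IsCycle {α : Type u} (R : α → α → Prop) (x : ℕ → α) (n : ℕ) : Prop :=
  1 ≤ n ∧ IsWalk R x n ∧ x n = x 0 ∧ ∀ i < n, ∀ j < n, x i = x j → i = j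

/-- The digraph with vertex set `Vs` and arc relation `R` is strongly connected:
any two vertices are joined by directed paths in both directions. -/
def StronglyConnectedOn {α : Type u} (R : α → α → Prop) (Vs : Set α) : Prop :=
  ∀ u ∈ Vs, ∀ v ∈ Vs, ExistsPath R u v

/-- The digraph with vertex set `Vs` and arc relation `R` is unilateral:
any two vertices are joined by a directed path in at least one direction. -/
def UnilateralOn {α : Type u} (R : α → α → Prop) (Vs : Set α) : Prop :=
  ∀ u ∈ Vs, ∀ v ∈ Vs, ExistsPath R u v ∨ ExistsPath R v u

/-- A kernel by paths of the digraph with vertex set `Vs` and arc relation `R`: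
no directed path joins two distinct vertices of `K`, and every vertex of `Vs`
not in `K` has a directed path to a vertex of `K`. -/
def KernelByPaths {α : Type u} (R : α → α → Prop) (Vs : Set α) (K : Set α) : Prop :=
  K ⊆ Vs ∧
  (∀ u ∈ K, ∀ v ∈ K, u ≠ v → ¬ ExistsPath R u v) ∧
  (∀ u ∈ Vs, u ∉ K → ∃ v ∈ K, ExistsPath R u v)

/-- A `(k,l)`-kernel of the digraph with vertex set `Vs` and arc relation `R`:
every walk between two distinct vertices of `S` has length at least `k`, and
every vertex not in `S` has a walk of length at most `l` to a vertex of `S`. -/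
def klKernel {α : Type u} (R : α → α → Prop) (Vs : Set α) (k l : ℕ) (S : Set α) : Prop :=
  S ⊆ Vs ∧
  (∀ u ∈ S, ∀ v ∈ S, u ≠ v → ∀ x n, IsWalk R x n → x 0 = u → x n = v → k ≤ n) ∧
  (∀ u ∈ Vs, u ∉ S → ∃ v ∈ S, ∃ x n, IsWalk R x n ∧ x 0 = u ∧ x n = v ∧ n ≤ l)

/-- An independent set of the digraph with vertex set `Vs` and arc relation `R`:
there is no arc between two distinct vertices of `S`. -/
def IndependentOn {α : Type u} (R : α → α → Prop) (Vs : Set α) (S : Set α) : Prop :=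
  S ⊆ Vs ∧ ∀ u ∈ S, ∀ v ∈ S, u ≠ v → ¬ R u v

/-- An `l`-absorbent set of the digraph with vertex set `Vs` and arc relation `R`. -/
def lAbsorbentOn {α : Type u} (R : α → α → Prop) (Vs : Set α) (l : ℕ) (S : Set α) : Prop :=
  ∀ u ∈ Vs, u ∉ S → ∃ v ∈ S, ∃ x n, IsWalk R x n ∧ x 0 = u ∧ x n = v ∧ n ≤ l

section HColored

variable {V : Type u} {C : Type v}

/-- The arc relation of the subdigraph arc-induced by a set `F` of arcs. -/
def memRel (F : Set (V × V)) : V → V → Prop := fun a b => (a, b) ∈ F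

/-- The vertex set of the subdigraph `D⟨F⟩` arc-induced by a set `F` of arcs. -/
def classVerts (F : Set (V × V)) : Set V := {a | ∃ b, (a, b) ∈ F ∨ (b, a) ∈ F}

/-- The set of obstruction indices of the open walk `x 0, …, x n` in the
`H`-colored digraph with coloring `ρ`, where `HA` is the arc relation of `H`. -/
def obstructions (HA : C → C → Prop) (ρ : V → V → C) (x : ℕ → V) (n : ℕ) : Set ℕ :=
  {i | 1 ≤ i ∧ i < n ∧ ¬ HA (ρ (x (i - 1)) (x i)) (ρ (x i) (x (i + 1)))}

/-- The `H`-length of the open walk `x 0, …, x n`: the number of obstructions plus one. -/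
noncomputable def hLength (HA : C → C → Prop) (ρ : V → V → C) (x : ℕ → V) (n : ℕ) : ℕ :=
  (obstructions HA ρ x n).ncard + 1

/-- `S` is `(k,H)`-independent by walks: every walk between two distinct
vertices of `S` has `H`-length at least `k`. -/
def kHIndependentByWalks (DA : V → V → Prop) (HA : C → C → Prop) (ρ : V → V → C)
    (k : ℕ) (S : Set V) : Prop :=
  ∀ u ∈ S, ∀ v ∈ S, u ≠ v →
    ∀ x n, IsWalk DA x n → x 0 = u → x n = v → k ≤ hLength HA ρ x n

/-- `S` is `(l,H)`-absorbent by walks: every vertex not in `S` has a walk to a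
vertex of `S` of `H`-length at most `l`. -/
def lHAbsorbentByWalks (DA : V → V → Prop) (HA : C → C → Prop) (ρ : V → V → C)
    (l : ℕ) (S : Set V) : Prop :=
  ∀ u, u ∉ S → ∃ v ∈ S, ∃ x n, IsWalk DA x n ∧ x 0 = u ∧ x n = v ∧ hLength HA ρ x n ≤ l

/-- A `(k,l,H)`-kernel by walks. -/
def klHKernelByWalks (DA : V → V → Prop) (HA : C → C → Prop) (ρ : V → V → C)
    (k l : ℕ) (S : Set V) : Prop :=
  kHIndependentByWalks DA HA ρ k S ∧ lHAbsorbentByWalks DA HA ρ l S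

/-- `𝔉` is an `H`-class partition of the arc set of `D`: it is a partition of the
arc set, and two consecutive arcs form an `H`-arc of colors iff they lie in a
common class. -/
def IsHClassPartition (DA : V → V → Prop) (HA : C → C → Prop) (ρ : V → V → C)
    (𝔉 : Set (Set (V × V))) : Prop :=
  (∀ F ∈ 𝔉, F.Nonempty ∧ ∀ p ∈ F, DA p.1 p.2) ∧
  (∀ u v : V, DA u v → ∃! F, F ∈ 𝔉 ∧ (u, v) ∈ F) ∧
  (∀ u v w : V, DA u v → DA v w →
    (HA (ρ u v) (ρ v w) ↔ ∃ F ∈ 𝔉, (u, v) ∈ F ∧ (v, w) ∈ F))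

/-- There exist arcs `(u,v) ∈ F` and `(v,w) ∈ G`. -/
def classArc (F G : Set (V × V)) : Prop := ∃ u v w : V, (u, v) ∈ F ∧ (v, w) ∈ G

/-- The arc relation of the `H`-class digraph `C_𝔉(D)` (whose vertex set is `𝔉`). -/
def CRel (𝔉 : Set (Set (V × V))) : Set (V × V) → Set (V × V) → Prop :=
  fun F G => F ∈ 𝔉 ∧ G ∈ 𝔉 ∧ classArc F G

/-- `𝔉` is walk-preservative: for every arc `(F,G)` of `C_𝔉(D)` and every vertex
`z` of `D⟨F⟩` there is a directed path in `D⟨F⟩` from `z` to some vertex of `D⟨G⟩`. -/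
def WalkPreservative (𝔉 : Set (Set (V × V))) : Prop :=
  ∀ F ∈ 𝔉, ∀ G ∈ 𝔉, classArc F G → ∀ z ∈ classVerts F,
    ∃ w ∈ classVerts G, ExistsPath (memRel F) z w

/-- `N⁺(𝒮)`: the classes outside `𝒮` receiving an arc of `C_𝔉(D)` from `𝒮`. -/
def outNbhd (𝔉 𝒮 : Set (Set (V × V))) : Set (Set (V × V)) :=
  {G | G ∈ 𝔉 ∧ G ∉ 𝒮 ∧ ∃ F ∈ 𝒮, classArc F G}

/-- `N⁻_𝔉(x)`: the classes containing an arc entering `x`. -/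
def inClasses (𝔉 : Set (Set (V × V))) (x : V) : Set (Set (V × V)) :=
  {F | F ∈ 𝔉 ∧ ∃ u, (u, x) ∈ F}

/-- `N⁺_𝔉(x)`: the classes containing an arc leaving `x`. -/
def outClasses (𝔉 : Set (Set (V × V))) (x : V) : Set (Set (V × V)) :=
  {F | F ∈ 𝔉 ∧ ∃ v, (x, v) ∈ F}

/-- `N_𝔉(x) = N⁻_𝔉(x) ∪ N⁺_𝔉(x)`. -/
def nbhdClasses (𝔉 : Set (Set (V × V))) (x : V) : Set (Set (V × V)) :=
  inClasses 𝔉 x ∪ outClasses 𝔉 x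

/-- `x` is obstruction-free in `D`: every arc entering `x` followed by every arc
leaving `x` is an `H`-arc of colors. -/
def ObstructionFree (DA : V → V → Prop) (HA : C → C → Prop) (ρ : V → V → C) (x : V) : Prop :=
  ∀ u w, DA u x → DA x w → HA (ρ u x) (ρ x w)

/-- `C_𝔉(D)` has no sinks: every class has an out-arc to a different class. -/
def CNoSinks (𝔉 : Set (Set (V × V))) : Prop :=
  ∀ F ∈ 𝔉, ∃ G ∈ 𝔉, G ≠ F ∧ classArc F G

/-- The (loopless) subdigraph `D⟨F⟩` has no sinks. -/
def NoSinksIn (F : Set (V × V)) : Prop :=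
  ∀ x ∈ classVerts F, ∃ y, (x, y) ∈ F

end HColored

section Aux

variable {V : Type u} {C : Type v}

lemma obstructions_finite (HA : C → C → Prop) (ρ : V → V → C) (x : ℕ → V) (n : ℕ) :
    (obstructions HA ρ x n).Finite :=
  (Set.finite_Iio n).subset (fun _ hi => hi.2.1)

/-- A walk all of whose arcs lie in a single class of an `H`-class partition has no
obstructions. -/
lemma no_obstructions_of_class {DA : V → V → Prop} {HA : C → C → Prop} {ρ : V → V → C}
    {𝔉 : Set (Set (V × V))} (hpart : IsHClassPartition DA HA ρ 𝔉)
    {F : Set (V × V)} (hF : F ∈ 𝔉) (x : ℕ → V) (p : ℕ)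
    (harc : ∀ i < p, (x i, x (i + 1)) ∈ F) :
    obstructions HA ρ x p = ∅ := by
  ext i
  simp only [obstructions, Set.mem_setOf_eq, Set.mem_empty_iff_false, iff_false, not_and]
  intro h1 h2 hHA
  apply hHA
  have e1 : i - 1 + 1 = i := by omega
  have a1 : (x (i - 1), x i) ∈ F := by
    have := harc (i - 1) (by omega); rwa [e1] at this
  have a2 : (x i, x (i + 1)) ∈ F := harc i h2
  have d1 : DA (x (i - 1)) (x i) := (hpart.1 F hF).2 _ a1
  have d2 : DA (x i) (x (i + 1)) := (hpart.1 F hF).2 _ a2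
  exact (hpart.2.2 _ _ _ d1 d2).mpr ⟨F, hF, a1, a2⟩

/-- A walk all of whose arcs lie in `⋃₀ 𝒮` with `𝒮` independent has no obstructions. -/
lemma no_obstructions_of_sUnion {DA : V → V → Prop} {HA : C → C → Prop} {ρ : V → V → C}
    {𝔉 : Set (Set (V × V))} (hpart : IsHClassPartition DA HA ρ 𝔉)
    {𝒮 : Set (Set (V × V))} (hind : IndependentOn (CRel 𝔉) 𝔉 𝒮)
    (x : ℕ → V) (p : ℕ)
    (harc : ∀ i < p, (x i, x (i + 1)) ∈ ⋃₀ 𝒮) :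
    obstructions HA ρ x p = ∅ := by
  ext i
  simp only [obstructions, Set.mem_setOf_eq, Set.mem_empty_iff_false, iff_false, not_and]
  intro h1 h2 hHA
  apply hHA
  have e1 : i - 1 + 1 = i := by omega
  obtain ⟨S1, hS1, a1⟩ : (x (i - 1), x i) ∈ ⋃₀ 𝒮 := by
    have := harc (i - 1) (by omega); rwa [e1] at this
  obtain ⟨S2, hS2, a2⟩ := harc i h2
  have hS1F : S1 ∈ 𝔉 := hind.1 hS1
  have hS2F : S2 ∈ 𝔉 := hind.1 hS2
  have d1 : DA (x (i - 1)) (x i) := (hpart.1 S1 hS1F).2 _ a1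
  have d2 : DA (x i) (x (i + 1)) := (hpart.1 S2 hS2F).2 _ a2
  by_cases hEq : S1 = S2
  · subst hEq
    exact (hpart.2.2 _ _ _ d1 d2).mpr ⟨S1, hS1F, a1, a2⟩
  · exact absurd ⟨hS1F, hS2F, x (i - 1), x i, x (i + 1), a1, a2⟩
      (hind.2 S1 hS1 S2 hS2 hEq)

/-- Concatenating an obstruction-free walk with another walk adds at most one
obstruction (at the junction). -/
lemma walk_concat {DA : V → V → Prop} {HA : C → C → Prop} {ρ : V → V → C}
    (x : ℕ → V) (p : ℕ) (y : ℕ → V) (n : ℕ)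
    (hx : IsWalk DA x p) (hy : IsWalk DA y n) (hxy : x p = y 0)
    (hobsx : obstructions HA ρ x p = ∅) :
    ∃ z : ℕ → V, IsWalk DA z (p + n) ∧ z 0 = x 0 ∧ z (p + n) = y n ∧
      (obstructions HA ρ z (p + n)).ncard ≤ (obstructions HA ρ y n).ncard + 1 := by
  classical
  refine ⟨fun j => if j < p then x j else y (j - p), ?_, ?_, ?_, ?_⟩
  · intro i hi
    by_cases h1 : i < p
    · by_cases h2 : i + 1 < p
      · simpa [h1, h2] using hx i h1
      · have e : i + 1 = p := by omega
        have := hx i h1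
        simp only [h1, h2, if_true, if_false, if_pos, if_neg]
        rw [e, Nat.sub_self, ← hxy, ← e]
        exact this
    · have h2 : ¬ i + 1 < p := by omega
      have e : i + 1 - p = (i - p) + 1 := by omega
      simp only [h1, h2, if_false, if_neg]
      rw [e]
      exact hy (i - p) (by omega)
  · by_cases h : 0 < p
    · simp [h]
    · have : p = 0 := by omega
      simp [this, ← hxy, this]
  · have : ¬ p + n < p := by omega
    simp [this]
  · set z : ℕ → V := fun j => if j < p then x j else y (j - p) with hz
    have hzx : ∀ j ≤ p, z j = x j := by
      intro j hj
      by_cases h : j < p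
      · simp [hz, h]
      · have : j = p := by omega
        simp [hz, this, ← hxy]
    have hzy : ∀ j, p ≤ j → z j = y (j - p) := by
      intro j hj
      by_cases h : j < p
      · omega
      · simp [hz, h]
    have hsub : obstructions HA ρ z (p + n) ⊆
        insert p ((· + p) '' obstructions HA ρ y n) := by
      intro i hi
      obtain ⟨h1, h2, h3⟩ := hi
      by_cases hip : i < p
      · exfalso
        have e1 : z (i - 1) = x (i - 1) := hzx _ (by omega)
        have e2 : z i = x i := hzx _ (by omega)
        have e3 : z (i + 1) = x (i + 1) := hzx _ (by omega)
        rw [e1, e2, e3] at h3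
        have : i ∈ obstructions HA ρ x p := ⟨h1, hip, h3⟩
        rw [hobsx] at this
        exact this
      · by_cases hip2 : i = p
        · rw [hip2]; exact Set.mem_insert p _
        · right
          refine ⟨i - p, ?_, show i - p + p = i by omega⟩
        -- obstruction of y at i - p
          have e1 : z (i - 1) = y (i - 1 - p) := hzy _ (by omega)
          have e2 : z i = y (i - p) := hzy _ (by omega)
          have e3 : z (i + 1) = y (i + 1 - p) := hzy _ (by omega)
          have f1 : i - 1 - p = (i - p) - 1 := by omega
          have f3 : i + 1 - p = (i - p) + 1 := by omega
          rw [e1, e2, e3, f1, f3] at h3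
          exact ⟨by omega, by omega, h3⟩
    calc (obstructions HA ρ z (p + n)).ncard
        ≤ (insert p ((· + p) '' obstructions HA ρ y n)).ncard :=
          Set.ncard_le_ncard hsub
            (((obstructions_finite HA ρ y n).image _).insert p)
      _ ≤ ((· + p) '' obstructions HA ρ y n).ncard + 1 :=
          Set.ncard_insert_le _ _
      _ ≤ (obstructions HA ρ y n).ncard + 1 :=
          Nat.add_le_add_right (Set.ncard_image_le (obstructions_finite HA ρ y n)) 1

/-- Main induction: from a vertex of `classVerts (G 0)`, following a `CRel`-walk
of length `m` into `𝒮` and then a kernel path, we reach `K` with at most `m`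
obstructions. -/
lemma main_claim {DA : V → V → Prop} {HA : C → C → Prop} {ρ : V → V → C}
    {𝔉 : Set (Set (V × V))} (hpart : IsHClassPartition DA HA ρ 𝔉)
    (hwp : WalkPreservative 𝔉)
    {𝒮 : Set (Set (V × V))} (hind : IndependentOn (CRel 𝔉) 𝔉 𝒮)
    {K : Set V} (hK : KernelByPaths (memRel (⋃₀ 𝒮)) (classVerts (⋃₀ 𝒮)) K) :
    ∀ m : ℕ, ∀ G : ℕ → Set (V × V), ∀ u : V,
      IsWalk (CRel 𝔉) G m → G 0 ∈ 𝔉 → G m ∈ 𝒮 → u ∈ classVerts (G 0) →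
      ∃ v ∈ K, ∃ x n, IsWalk DA x n ∧ x 0 = u ∧ x n = v ∧
        (obstructions HA ρ x n).ncard ≤ m := by
  have hDAUnion : ∀ a b : V, (a, b) ∈ ⋃₀ 𝒮 → DA a b := by
    rintro a b ⟨S, hS, hab⟩
    exact (hpart.1 S (hind.1 hS)).2 _ hab
  intro m
  induction m with
  | zero =>
    intro G u _ _ hG0S hu
    have huU : u ∈ classVerts (⋃₀ 𝒮) := by
      obtain ⟨b, hb⟩ := hu
      exact ⟨b, by cases hb with
        | inl h => exact Or.inl ⟨G 0, hG0S, h⟩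
        | inr h => exact Or.inr ⟨G 0, hG0S, h⟩⟩
    by_cases huK : u ∈ K
    · refine ⟨u, huK, fun _ => u, 0, fun i hi => absurd hi (by omega), rfl, rfl, ?_⟩
      have : obstructions HA ρ (fun _ => u) 0 = ∅ := by
        ext i; simp only [obstructions, Set.mem_setOf_eq, Set.mem_empty_iff_false,
          iff_false, not_and]; omega
      simp [this]
    · obtain ⟨v, hvK, x, n, ⟨hxw, _⟩, hx0, hxn⟩ := hK.2.2 u huU huK
      have harcU : ∀ i < n, (x i, x (i + 1)) ∈ ⋃₀ 𝒮 := fun i hi => hxw i hi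
      refine ⟨v, hvK, x, n, fun i hi => hDAUnion _ _ (harcU i hi), hx0, hxn, ?_⟩
      rw [no_obstructions_of_sUnion hpart hind x n harcU]
      simp
  | succ m ih =>
    intro G u hG hG0 hGmS hu
    have harc : CRel 𝔉 (G 0) (G 1) := hG 0 (by omega)
    obtain ⟨_, hG1, hcl⟩ := harc
    obtain ⟨w, hw, xp, p, ⟨⟨hxpw, _⟩, hxp0, hxpp⟩⟩ := hwp (G 0) hG0 (G 1) hG1 hcl u hu
    have hG' : IsWalk (CRel 𝔉) (fun i => G (i + 1)) m := fun i hi => hG (i + 1) (by omega)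
    obtain ⟨v, hvK, y, n, hyw, hy0, hyn, hycard⟩ :=
      ih (fun i => G (i + 1)) w hG' hG1 hGmS hw
    have hxDA : IsWalk DA xp p := fun i hi => (hpart.1 (G 0) hG0).2 _ (hxpw i hi)
    have hobsx : obstructions HA ρ xp p = ∅ :=
      no_obstructions_of_class hpart hG0 xp p (fun i hi => hxpw i hi)
    obtain ⟨z, hzw, hz0, hzn, hzcard⟩ :=
      walk_concat xp p y n hxDA hyw (by rw [hxpp, hy0]) hobsx
    exact ⟨v, hvK, z, p + n, hzw, by rw [hz0, hxp0], by rw [hzn, hyn],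
      le_trans hzcard (by omega)⟩

end Aux

/-- Proposition `c1.p2`. Let `D` be an `H`-colored digraph without
isolated vertices, `𝔉` a walk-preservative `H`-class partition of `A(D)`, and `𝒮` an
independent and `l`-absorbent set in `C_𝔉(D)` for some `l ≥ 1`. If `K` is a kernel by
paths in `D⟨⋃_{F ∈ 𝒮} F⟩`, then `K` is an `(l+1,H)`-absorbent set by walks in `D`. -/
theorem stmt9 {V : Type u} {C : Type v}
    (DA : V → V → Prop) (hloopless : ∀ a : V, ¬ DA a a)
    (HA : C → C → Prop) (ρ : V → V → C)
    (hiso : ∀ x : V, ∃ y : V, DA x y ∨ DA y x)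
    (𝔉 : Set (Set (V × V)))
    (hpart : IsHClassPartition DA HA ρ 𝔉)
    (hwp : WalkPreservative 𝔉)
    (l : ℕ) (hl : 1 ≤ l)
    (𝒮 : Set (Set (V × V)))
    (hind : IndependentOn (CRel 𝔉) 𝔉 𝒮)
    (habs : lAbsorbentOn (CRel 𝔉) 𝔉 l 𝒮)
    (K : Set V)
    (hK : KernelByPaths (memRel (⋃₀ 𝒮)) (classVerts (⋃₀ 𝒮)) K) :
    lHAbsorbentByWalks DA HA ρ (l + 1) K := by
  intro u huK
  -- find a class containing an arc incident to u
  obtain ⟨y, hy⟩ := hiso u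
  obtain ⟨F, hF, huF⟩ : ∃ F ∈ 𝔉, u ∈ classVerts F := by
    cases hy with
    | inl h =>
      obtain ⟨F, ⟨hF1, hF2⟩, _⟩ := hpart.2.1 u y h
      exact ⟨F, hF1, y, Or.inl hF2⟩
    | inr h =>
      obtain ⟨F, ⟨hF1, hF2⟩, _⟩ := hpart.2.1 y u h
      exact ⟨F, hF1, y, Or.inr hF2⟩
  by_cases hFS : F ∈ 𝒮
  · obtain ⟨v, hvK, x, n, hxw, hx0, hxn, hcard⟩ :=
      main_claim hpart hwp hind hK 0 (fun _ => F) u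
        (fun i hi => absurd hi (by omega)) hF hFS huF
    exact ⟨v, hvK, x, n, hxw, hx0, hxn, by unfold hLength; omega⟩
  · obtain ⟨S, hS, G, m, hGw, hG0, hGm, hml⟩ := habs F hF hFS
    obtain ⟨v, hvK, x, n, hxw, hx0, hxn, hcard⟩ :=
      main_claim hpart hwp hind hK m G u hGw (hG0 ▸ hF) (hGm ▸ hS) (hG0 ▸ huF)
    exact ⟨v, hvK, x, n, hxw, hx0, hxn, by unfold hLength; omega⟩
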